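/- arXiv:2208.05869 — 10 statements merged into one kernel-verified Lean document; each statement's English description precedes it below -/
import Mathlib

section
/- Let H be a (multiplicatively written) monoid and let A and S be subsets of H with 1_H ∉ A ∪ S. Then the following are equivalent: (a) every element of S factors as a non-empty product of elements of A; (b) there exists a strongly artinian preorder ≼ on H such that every x ∈ S is a ≼-non-unit, and an element a ∈ H is a ≼-irreducible if and only if it is a ≼-quark, if and only if a ∈ A; (c) there exists an artinian preorder ≼ on H such that every x ∈ S is a ≼-non-unit and every ≼-irreducible is an element of A. -/
open Pointwise

namespace FactPaper

/-- `u` is a `≼`-unit for the preorder-like relation `r` on a monoid. -/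
def RUnit {M : Type*} [Monoid M] (r : M → M → Prop) (u : M) : Prop :=
  r u 1 ∧ r 1 u

/-- `u` is a `≼`-non-unit. -/
def RNonUnit {M : Type*} [Monoid M] (r : M → M → Prop) (u : M) : Prop :=
  ¬ RUnit r u

/-- The strict part `≺` of the relation `r`. -/
def RLt {M : Type*} (r : M → M → Prop) (x y : M) : Prop :=
  r x y ∧ ¬ r y x

/-- `a` is a `≼`-irreducible. -/
def RIrred {M : Type*} [Monoid M] (r : M → M → Prop) (a : M) : Prop :=
  RNonUnit r a ∧
    ∀ y z : M, RNonUnit r y → RNonUnit r z → RLt r y a → RLt r z a → a ≠ y * z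

/-- `a` is a `≼`-atom. -/
def RAtom {M : Type*} [Monoid M] (r : M → M → Prop) (a : M) : Prop :=
  RNonUnit r a ∧ ∀ y z : M, RNonUnit r y → RNonUnit r z → a ≠ y * z

/-- `a` is a `≼`-quark. -/
def RQuark {M : Type*} [Monoid M] (r : M → M → Prop) (a : M) : Prop :=
  RNonUnit r a ∧ ¬ ∃ b : M, RNonUnit r b ∧ RLt r b a

/-- The divisibility preorder: `Dvd2 x y` iff `y ∈ M x M`. -/
def Dvd2 {M : Type*} [Monoid M] (x y : M) : Prop :=
  ∃ u v : M, y = u * x * v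

/-- The restriction of a relation on `M` to a submonoid `K`. -/
def SubRel {M : Type*} [Monoid M] (r : M → M → Prop) (K : Submonoid M) (a b : K) : Prop :=
  r (a : M) (b : M)

/-- The preorder `⊑` on words induced by `r`: an injection of indices matching
`r`-equivalent letters. -/
def WordLe {M : Type*} (r : M → M → Prop) (l m : List M) : Prop :=
  ∃ σ : Fin l.length ↪ Fin m.length,
    ∀ i : Fin l.length, r (l.get i) (m.get (σ i)) ∧ r (m.get (σ i)) (l.get i)

/-- `⊑`-equivalence of words. -/
def WordEquiv {M : Type*} (r : M → M → Prop) (l m : List M) : Prop :=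
  WordLe r l m ∧ WordLe r m l

/-- `l` is a `≼`-factorization of `x`: a word of `≼`-irreducibles with product `x`. -/
def IsFac {M : Type*} [Monoid M] (r : M → M → Prop) (x : M) (l : List M) : Prop :=
  (∀ a ∈ l, RIrred r a) ∧ l.prod = x

/-- `l` is a minimal `≼`-factorization of `x`: a `⊑`-minimal `≼`-factorization. -/
def IsMinFac {M : Type*} [Monoid M] (r : M → M → Prop) (x : M) (l : List M) : Prop :=
  IsFac r x l ∧ ∀ m : List M, IsFac r x m → WordLe r m l → WordLe r l m

/-- `l` is an atomic `≼`-factorization of `x`. -/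
def IsAtomicFac {M : Type*} [Monoid M] (r : M → M → Prop) (x : M) (l : List M) : Prop :=
  (∀ a ∈ l, RAtom r a) ∧ l.prod = x

/-- `l` is a minimal atomic `≼`-factorization of `x`. -/
def IsMinAtomicFac {M : Type*} [Monoid M] (r : M → M → Prop) (x : M) (l : List M) : Prop :=
  IsMinFac r x l ∧ ∀ a ∈ l, RAtom r a

/-- Every `≼`-non-unit is a non-empty product of `≼`-irreducibles. -/
def Factorable {M : Type*} [Monoid M] (r : M → M → Prop) : Prop :=
  ∀ x : M, RNonUnit r x →
    ∃ l : List M, l ≠ [] ∧ (∀ a ∈ l, RIrred r a) ∧ l.prod = x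

/-- Every `≼`-non-unit is a non-empty product of `≼`-atoms. -/
def Atomic {M : Type*} [Monoid M] (r : M → M → Prop) : Prop :=
  ∀ x : M, RNonUnit r x →
    ∃ l : List M, l ≠ [] ∧ (∀ a ∈ l, RAtom r a) ∧ l.prod = x

/-- The premonoid `(M, r)` is finitely generated up to units. -/
def IsFGU {M : Type*} [Monoid M] (r : M → M → Prop) : Prop :=
  ∃ A : Set M, A.Finite ∧
    Submonoid.closure
      {w : M | ∃ u a v : M, RUnit r u ∧ a ∈ A ∧ RUnit r v ∧ w = u * a * v} = ⊤

/-- The submonoid generated by the `∣_M`-divisors of `x` (ground monoid of the germ of a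
premonoid at `x`). -/
def GermSub {M : Type*} [Monoid M] (x : M) : Submonoid M :=
  Submonoid.closure {y : M | Dvd2 y x}

/-- Membership in the smallest divisor-closed submonoid containing `x`. -/
inductive InDC {M : Type*} [Monoid M] (x : M) : M → Prop
  | base : InDC x x
  | one : InDC x 1
  | mul {a b : M} : InDC x a → InDC x b → InDC x (a * b)
  | dvd {a b : M} : InDC x b → Dvd2 a b → InDC x a

/-- The smallest divisor-closed submonoid of `M` containing `x`. -/
def DCSub {M : Type*} [Monoid M] (x : M) : Submonoid M where
  carrier := {y : M | InDC x y}
  mul_mem' := fun ha hb => InDC.mul ha hb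
  one_mem' := InDC.one

/-- `(M, r)` is a weakly positive monoid. -/
def WeaklyPositive {M : Type*} [Monoid M] (r : M → M → Prop) : Prop :=
  (∀ x u v : M, RUnit r u → RUnit r v → r (u * x * v) x) ∧
    (∀ x a b : M, r x (a * x * b))

/-- `(M, r)` is locally of finite type (loft). -/
def IsLoft {M : Type*} [Monoid M] (r : M → M → Prop) : Prop :=
  ∀ x : M, RNonUnit r x →
    ∃ A : Set M, A.Finite ∧ A ⊆ {a : M | RIrred r a} ∧
      ∀ l : List M, IsFac r x l →
        ∃ m : List M, (∀ a ∈ m, a ∈ A) ∧ WordEquiv r l m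

/-- `(M, r)` is BF-factorable. -/
def IsBFFactorable {M : Type*} [Monoid M] (r : M → M → Prop) : Prop :=
  ∀ x : M, RNonUnit r x →
    {n : ℕ | ∃ l : List M, IsFac r x l ∧ l.length = n}.Finite ∧
      {n : ℕ | ∃ l : List M, IsFac r x l ∧ l.length = n}.Nonempty

/-- `(M, r)` is BmF-factorable. -/
def IsBmFFactorable {M : Type*} [Monoid M] (r : M → M → Prop) : Prop :=
  ∀ x : M, RNonUnit r x →
    {n : ℕ | ∃ l : List M, IsMinFac r x l ∧ l.length = n}.Finite ∧
      {n : ℕ | ∃ l : List M, IsMinFac r x l ∧ l.length = n}.Nonempty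

/-- `(M, r)` is FF-factorable: modulo `⊑`-equivalence, every `≼`-non-unit has finitely
many (and at least one) `≼`-factorizations. -/
def IsFFFactorable {M : Type*} [Monoid M] (r : M → M → Prop) : Prop :=
  ∀ x : M, RNonUnit r x →
    (∃ l : List M, IsFac r x l) ∧
      ∃ F : Set (List M), F.Finite ∧
        ∀ l : List M, IsFac r x l → ∃ m ∈ F, IsFac r x m ∧ WordEquiv r l m

/-- `(M, r)` is FmF-factorable. -/
def IsFmFFactorable {M : Type*} [Monoid M] (r : M → M → Prop) : Prop :=
  ∀ x : M, RNonUnit r x →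
    (∃ l : List M, IsMinFac r x l) ∧
      ∃ F : Set (List M), F.Finite ∧
        ∀ l : List M, IsMinFac r x l → ∃ m ∈ F, IsMinFac r x m ∧ WordEquiv r l m

/-- `(M, r)` is FF-atomic. -/
def IsFFAtomic {M : Type*} [Monoid M] (r : M → M → Prop) : Prop :=
  ∀ x : M, RNonUnit r x →
    (∃ l : List M, IsAtomicFac r x l) ∧
      ∃ F : Set (List M), F.Finite ∧
        ∀ l : List M, IsAtomicFac r x l → ∃ m ∈ F, IsAtomicFac r x m ∧ WordEquiv r l m

/-- `(M, r)` is FmF-atomic. -/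
def IsFmFAtomic {M : Type*} [Monoid M] (r : M → M → Prop) : Prop :=
  ∀ x : M, RNonUnit r x →
    (∃ l : List M, IsMinAtomicFac r x l) ∧
      ∃ F : Set (List M), F.Finite ∧
        ∀ l : List M, IsMinAtomicFac r x l → ∃ m ∈ F, IsMinAtomicFac r x m ∧ WordEquiv r l m

/-!
(c) ⇒ (a) is the abstract factorization theorem: `≺` is well founded, and a non-unit that is not
irreducible splits into two strictly smaller non-units. (b) ⇒ (c): in a strictly decreasing
sequence at most one term is a unit, so some tail consists of non-units, which finite height
forbids. (a) ⇒ (b): compare elements by the least length `ρ` of a factorization over `A`; then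
`ρ`-value `1` picks out exactly `A`, and any `x` with `ρ x ≥ 2` is `a * y` with `a ∈ A` and
`0 < ρ y < ρ x`, so an element of `A` is both an irreducible and a quark, and nothing else is.
-/

def RArtinian {M : Type*} (r : M → M → Prop) : Prop :=
  ¬ ∃ f : ℕ → M, ∀ n : ℕ, RLt r (f (n + 1)) (f n)

def RStronglyArtinian {M : Type*} [Monoid M] (r : M → M → Prop) : Prop :=
  ∀ x : M, ∃ N : ℕ, ∀ (n : ℕ) (f : ℕ → M), f 0 = x →
    (∀ k < n, RNonUnit r (f k)) →
    (∀ k : ℕ, k + 1 < n → RLt r (f (k + 1)) (f k)) → n ≤ N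

section Artinian

variable {M : Type*} {r : M → M → Prop}

theorem RArtinian.wellFounded (h : RArtinian r) : WellFounded (RLt r) :=
  wellFounded_iff_isEmpty_descending_chain.2 ⟨fun ⟨f, hf⟩ => h ⟨f, hf⟩⟩

theorem RArtinian.factorable [Monoid M] (h : RArtinian r) : Factorable r := by
  intro x hx
  induction x using h.wellFounded.induction with
  | _ x ih =>
  by_cases hirr : RIrred r x
  · exact ⟨[x], by simp, by simpa using hirr, by simp⟩
  · obtain ⟨y, z, hy, hz, hyx, hzx, rfl⟩ :
        ∃ y z, RNonUnit r y ∧ RNonUnit r z ∧ RLt r y x ∧ RLt r z x ∧ x = y * z := by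
      simpa [RIrred, hx] using hirr
    obtain ⟨ly, hly0, hly, rfl⟩ := ih y hyx hy
    obtain ⟨lz, -, hlz, rfl⟩ := ih z hzx hz
    refine ⟨ly ++ lz, by simp [hly0], fun a ha => ?_, List.prod_append⟩
    exact (List.mem_append.1 ha).elim (hly a) (hlz a)

variable [IsTrans M r]

theorem RLt.trans {x y z : M} (hxy : RLt r x y) (hyz : RLt r y z) : RLt r x z :=
  ⟨_root_.trans_of r hxy.1 hyz.1, fun hzx => hxy.2 (_root_.trans_of r hyz.1 hzx)⟩

theorem rLt_of_descending {f : ℕ → M} (hf : ∀ n, RLt r (f (n + 1)) (f n)) {m n : ℕ}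
    (hmn : m < n) : RLt r (f n) (f m) := by
  induction hmn with
  | refl => exact hf m
  | step _ ih => exact (hf _).trans ih

variable [Monoid M]

theorem exists_forall_rNonUnit_of_descending {f : ℕ → M}
    (hf : ∀ n, RLt r (f (n + 1)) (f n)) : ∃ i, ∀ k, RNonUnit r (f (i + k)) := by
  by_cases hunit : ∃ j, RUnit r (f j)
  · obtain ⟨j, hj⟩ := hunit
    refine ⟨j + 1, fun k hk => ?_⟩
    exact (rLt_of_descending hf (by omega : j < j + 1 + k)).2 (_root_.trans_of r hj.1 hk.2)
  · exact ⟨0, fun k hk => hunit ⟨0 + k, hk⟩⟩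

theorem RStronglyArtinian.rArtinian (h : RStronglyArtinian r) : RArtinian r := by
  rintro ⟨f, hf⟩
  obtain ⟨i, hi⟩ := exists_forall_rNonUnit_of_descending hf
  obtain ⟨N, hN⟩ := h (f i)
  have := hN (N + 1) (fun k => f (i + k)) rfl (fun k _ => hi k) (fun k _ => hf (i + k))
  omega

end Artinian

section InvImage

variable {M : Type*} {φ : M → ℕ}

theorem rLt_invImage_iff {x y : M} : RLt (InvImage (· ≤ ·) φ) x y ↔ φ x < φ y := by
  simp only [RLt, InvImage]
  omega

variable [Monoid M]

theorem rNonUnit_invImage_iff (h1 : φ 1 = 0) {u : M} :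
    RNonUnit (InvImage (· ≤ ·) φ) u ↔ 0 < φ u := by
  simp only [RNonUnit, RUnit, InvImage, h1]
  omega

theorem rStronglyArtinian_invImage : RStronglyArtinian (InvImage (· ≤ ·) φ) := by
  refine fun x => ⟨φ x + 1, fun n f hf0 _ hf => ?_⟩
  have descent : ∀ k < n, φ (f k) + k ≤ φ x := by
    intro k hk
    induction k with
    | zero => simp [hf0]
    | succ k ih =>
      have := rLt_invImage_iff.1 (hf k hk)
      have := ih (by omega)
      omega
  rcases Nat.eq_zero_or_pos n with rfl | hn
  · omega
  · have := descent (n - 1) (by omega)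
    omega

end InvImage

section FactorLength

variable {H : Type*} [Monoid H] {A : Set H}

/-- The least length of a factorization over `A`. An element with no such factorization gets
`sInf ∅ = 0`, like `1`, so it becomes a unit for the preorder induced by `factorLength A`. -/
noncomputable def factorLength (A : Set H) (x : H) : ℕ :=
  sInf {n | ∃ l : List H, (∀ a ∈ l, a ∈ A) ∧ l.prod = x ∧ l.length = n}

variable (A) in
theorem factorLength_one : factorLength A 1 = 0 :=
  Nat.sInf_eq_zero.2 (Or.inl ⟨[], by simp⟩)

theorem factorLength_prod_le {l : List H} (hl : ∀ a ∈ l, a ∈ A) :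
    factorLength A l.prod ≤ l.length :=
  Nat.sInf_le ⟨l, hl, rfl, rfl⟩

theorem factorLength_pos {l : List H} (hl : ∀ a ∈ l, a ∈ A) (hprod : l.prod ≠ 1) :
    0 < factorLength A l.prod := by
  refine Nat.pos_of_ne_zero fun h => ?_
  rcases Nat.sInf_eq_zero.1 h with ⟨l', -, hl', hlen⟩ | hempty
  · rw [List.length_eq_zero_iff.1 hlen, List.prod_nil] at hl'
    exact hprod hl'.symm
  · exact hempty.subset ⟨l, hl, rfl, rfl⟩

theorem exists_factorization_of_factorLength_pos {x : H} (h : 0 < factorLength A x) :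
    ∃ l : List H, (∀ a ∈ l, a ∈ A) ∧ l.prod = x ∧ l.length = factorLength A x :=
  Nat.sInf_mem (Nat.nonempty_of_pos_sInf h)

theorem factorLength_eq_one_iff (h1A : (1 : H) ∉ A) {a : H} :
    factorLength A a = 1 ↔ a ∈ A := by
  constructor
  · intro h
    obtain ⟨l, hl, rfl, hlen⟩ := exists_factorization_of_factorLength_pos (h ▸ Nat.one_pos)
    obtain ⟨b, rfl⟩ := List.length_eq_one_iff.1 (hlen.trans h)
    simpa using hl
  · intro ha
    have hle := factorLength_prod_le (l := [a]) (by simpa using ha)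
    have hpos := factorLength_pos (l := [a]) (by simpa using ha) (by rintro h; simp_all)
    simp only [List.prod_singleton, List.length_singleton] at hle hpos
    omega

theorem exists_mul_of_one_lt_factorLength {x : H} (h : 1 < factorLength A x) :
    ∃ a ∈ A, ∃ y, x = a * y ∧
      0 < factorLength A y ∧ factorLength A y < factorLength A x := by
  obtain ⟨l, hl, hprod, hlen⟩ :=
    exists_factorization_of_factorLength_pos (by omega : 0 < factorLength A x)
  obtain ⟨a, t, rfl⟩ := List.exists_cons_of_ne_nil (l := l) (by rintro rfl; simp at hlen; omega)
  rw [List.forall_mem_cons] at hl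
  rw [List.prod_cons] at hprod
  rw [List.length_cons] at hlen
  have ht_ne : t.prod ≠ 1 := by
    intro ht
    rw [ht, mul_one] at hprod
    have := factorLength_prod_le (l := [a]) (by simpa using hl.1)
    simp only [List.prod_singleton, List.length_singleton, hprod] at this
    omega
  have ht_le := factorLength_prod_le hl.2
  exact ⟨a, hl.1, t.prod, hprod.symm, factorLength_pos hl.2 ht_ne, by omega⟩

theorem rIrred_factorLength_iff (h1A : (1 : H) ∉ A) {a : H} :
    RIrred (InvImage (· ≤ ·) (factorLength A)) a ↔ a ∈ A := by
  simp only [RIrred, rNonUnit_invImage_iff (factorLength_one A), rLt_invImage_iff,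
    ← factorLength_eq_one_iff h1A]
  constructor
  · rintro ⟨hpos, hirr⟩
    by_contra hne
    obtain ⟨b, hb, y, hby, hy, hya⟩ :=
      exists_mul_of_one_lt_factorLength (by omega : 1 < factorLength A a)
    have hb1 := (factorLength_eq_one_iff h1A).2 hb
    exact hirr b y (by omega) hy (by omega) hya hby
  · intro ha
    exact ⟨by omega, fun y _ hy _ hya _ => by omega⟩

theorem rQuark_factorLength_iff (h1A : (1 : H) ∉ A) {a : H} :
    RQuark (InvImage (· ≤ ·) (factorLength A)) a ↔ a ∈ A := by
  simp only [RQuark, rNonUnit_invImage_iff (factorLength_one A), rLt_invImage_iff,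
    ← factorLength_eq_one_iff h1A]
  constructor
  · rintro ⟨hpos, hquark⟩
    by_contra hne
    obtain ⟨b, hb, -⟩ := exists_mul_of_one_lt_factorLength (by omega : 1 < factorLength A a)
    have hb1 := (factorLength_eq_one_iff h1A).2 hb
    exact hquark ⟨b, by omega, by omega⟩
  · intro ha
    exact ⟨by omega, fun ⟨b, hb, hba⟩ => by omega⟩

end FactorLength

/-- Proposition: converse to the abstract factorization theorem.
For a monoid `H` and subsets `A S ⊆ H` with `1 ∉ A ∪ S`, the following are equivalent:
(a) every element of `S` factors as a non-empty product of elements of `A`;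
(b) there is a strongly artinian preorder `r` on `H` such that every `x ∈ S` is an
`r`-non-unit and the `r`-irreducibles = the `r`-quarks = the elements of `A`;
(c) there is an artinian preorder `r` on `H` such that every `x ∈ S` is an `r`-non-unit
and every `r`-irreducible lies in `A`. -/
theorem stmt0 {H : Type*} [Monoid H] (A S : Set H) (h1 : (1 : H) ∉ A ∪ S) :
    List.TFAE
      [ ∀ x ∈ S, ∃ l : List H, l ≠ [] ∧ (∀ a ∈ l, a ∈ A) ∧ l.prod = x,
        ∃ r : H → H → Prop, Reflexive r ∧ Transitive r ∧
          (∀ x : H, ∃ N : ℕ, ∀ (n : ℕ) (f : ℕ → H), f 0 = x →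
            (∀ k < n, RNonUnit r (f k)) →
            (∀ k : ℕ, k + 1 < n → RLt r (f (k + 1)) (f k)) → n ≤ N) ∧
          (∀ x ∈ S, RNonUnit r x) ∧
          (∀ a : H, (RIrred r a ↔ RQuark r a) ∧ (RIrred r a ↔ a ∈ A)),
        ∃ r : H → H → Prop, Reflexive r ∧ Transitive r ∧
          (¬ ∃ f : ℕ → H, ∀ n : ℕ, RLt r (f (n + 1)) (f n)) ∧
          (∀ x ∈ S, RNonUnit r x) ∧ (∀ a : H, RIrred r a → a ∈ A) ] := by
  obtain ⟨h1A, h1S⟩ : (1 : H) ∉ A ∧ (1 : H) ∉ S := by simpa using h1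
  tfae_have 1 → 2 := by
    intro hfac
    refine ⟨InvImage (· ≤ ·) (factorLength A), fun _ => le_rfl, fun _ _ _ => le_trans,
      rStronglyArtinian_invImage, fun x hx => ?_, fun a => ?_⟩
    · obtain ⟨l, -, hl, rfl⟩ := hfac x hx
      exact (rNonUnit_invImage_iff (factorLength_one A)).2
        (factorLength_pos hl fun h => h1S (h ▸ hx))
    · rw [rIrred_factorLength_iff h1A, rQuark_factorLength_iff h1A]
      exact ⟨Iff.rfl, Iff.rfl⟩
  tfae_have 2 → 3 := by
    rintro ⟨r, hrefl, htrans, hsa, hS, hA⟩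
    have : IsTrans H r := ⟨fun _ _ _ hab hbc => htrans hab hbc⟩
    exact ⟨r, hrefl, htrans, RStronglyArtinian.rArtinian hsa, hS, fun a ha => (hA a).2.1 ha⟩
  tfae_have 3 → 1 := fun ⟨_, _, _, hart, hS, hA⟩ x hx =>
    have ⟨l, hl0, hl, hprod⟩ := RArtinian.factorable hart x (hS x hx)
    ⟨l, hl0, fun a ha => hA a (hl a ha), hprod⟩
  tfae_finish

end FactPaper
end

section
/- Let 𝓗 = (H, ≼) be a premonoid, let x ∈ H, and let 𝓚 = (K, ≼_K) be a subpremonoid of 𝓗 such that K contains every ∣_H-divisor of x (and hence x itself). Then 𝓘_x(𝓗) = 𝓘_x(𝓚) and 𝓐_x(𝓗) = 𝓐_x(𝓚); that is, an element of H is a ≼-irreducible (resp., ≼-atom) dividing x in H if and only if it is a ≼_K-irreducible (resp., ≼_K-atom) dividing x in K. -/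
open Pointwise

namespace FactPaper

lemma rnonunit_sub {H : Type*} [Monoid H] (r : H → H → Prop) (K : Submonoid H)
    (a : K) : RNonUnit (SubRel r K) a ↔ RNonUnit r (a : H) := by
  simp [RNonUnit, RUnit, SubRel]

/-- Proposition 3.6(i). If `K` is a submonoid of `H` containing every
`∣_H`-divisor of `x` (and hence `x` itself), then the `≼`-irreducibles (resp. `≼`-atoms)
of `H` dividing `x` in `H` are exactly the `≼_K`-irreducibles (resp. `≼_K`-atoms) of `K`
dividing `x` in `K`. -/
theorem stmt1 {H : Type*} [Monoid H] (r : H → H → Prop)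
    (hrefl : Reflexive r) (htrans : Transitive r)
    (x : H) (K : Submonoid H) (hx : x ∈ K) (hK : ∀ y : H, Dvd2 y x → y ∈ K) :
    ∀ a : H,
      ((RIrred r a ∧ Dvd2 a x) ↔
        ∃ ha : a ∈ K, RIrred (SubRel r K) ⟨a, ha⟩ ∧ Dvd2 (⟨a, ha⟩ : K) (⟨x, hx⟩ : K)) ∧
      ((RAtom r a ∧ Dvd2 a x) ↔
        ∃ ha : a ∈ K, RAtom (SubRel r K) ⟨a, ha⟩ ∧ Dvd2 (⟨a, ha⟩ : K) (⟨x, hx⟩ : K)) := by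
  intro a
  constructor
  · constructor
    · rintro ⟨⟨hna, hirr⟩, hd⟩
      have haK : a ∈ K := hK a hd
      obtain ⟨u, v, hx'⟩ := hd
      have huK : u ∈ K := hK u ⟨1, a * v, by rw [hx', one_mul, mul_assoc]⟩
      have hvK : v ∈ K := hK v ⟨u * a, 1, by rw [hx', mul_one]⟩
      refine ⟨haK, ⟨(rnonunit_sub r K _).mpr hna, ?_⟩, ⟨⟨u, huK⟩, ⟨v, hvK⟩, Subtype.ext (by simpa using hx')⟩⟩
      rintro y z hy hz hly hlz heq
      exact hirr (y : H) (z : H) ((rnonunit_sub r K y).mp hy) ((rnonunit_sub r K z).mp hz)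
        hly hlz (by simpa using congrArg (Subtype.val) heq)
    · rintro ⟨haK, ⟨hna, hirr⟩, ⟨u, v, he⟩⟩
      have he' : x = (u : H) * a * (v : H) := by simpa using congrArg (Subtype.val) he
      have hdax : Dvd2 a x := ⟨u, v, he'⟩
      refine ⟨⟨(rnonunit_sub r K _).mp hna, ?_⟩, hdax⟩
      rintro y z hy hz hly hlz heq
      have hyK : y ∈ K := hK y ⟨(u : H), z * (v : H), by rw [he', heq]; group⟩
      have hzK : z ∈ K := hK z ⟨(u : H) * y, (v : H), by rw [he', heq]; group⟩
      exact hirr ⟨y, hyK⟩ ⟨z, hzK⟩ ((rnonunit_sub r K _).mpr hy) ((rnonunit_sub r K _).mpr hz)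
        hly hlz (Subtype.ext (by simpa using heq))
  · constructor
    · rintro ⟨⟨hna, hatom⟩, hd⟩
      have haK : a ∈ K := hK a hd
      obtain ⟨u, v, hx'⟩ := hd
      have huK : u ∈ K := hK u ⟨1, a * v, by rw [hx', one_mul, mul_assoc]⟩
      have hvK : v ∈ K := hK v ⟨u * a, 1, by rw [hx', mul_one]⟩
      refine ⟨haK, ⟨(rnonunit_sub r K _).mpr hna, ?_⟩, ⟨⟨u, huK⟩, ⟨v, hvK⟩, Subtype.ext (by simpa using hx')⟩⟩
      rintro y z hy hz heq
      exact hatom (y : H) (z : H) ((rnonunit_sub r K y).mp hy) ((rnonunit_sub r K z).mp hz)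
        (by simpa using congrArg (Subtype.val) heq)
    · rintro ⟨haK, ⟨hna, hatom⟩, ⟨u, v, he⟩⟩
      have he' : x = (u : H) * a * (v : H) := by simpa using congrArg (Subtype.val) he
      have hdax : Dvd2 a x := ⟨u, v, he'⟩
      refine ⟨⟨(rnonunit_sub r K _).mp hna, ?_⟩, hdax⟩
      rintro y z hy hz heq
      have hyK : y ∈ K := hK y ⟨(u : H), z * (v : H), by rw [he', heq]; group⟩
      have hzK : z ∈ K := hK z ⟨(u : H) * y, (v : H), by rw [he', heq]; group⟩
      exact hatom ⟨y, hyK⟩ ⟨z, hzK⟩ ((rnonunit_sub r K _).mpr hy) ((rnonunit_sub r K _).mpr hz)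
        (Subtype.ext (by simpa using heq))

end FactPaper
end

section
/- Let 𝓗 = (H, ≼) be a premonoid, let x ∈ H, and let 𝓚 = (K, ≼_K) be a subpremonoid of 𝓗 such that K contains every ∣_H-divisor of x. Then Z_𝓗(x) = Z_𝓚(x) and Z^m_𝓗(x) = Z^m_𝓚(x); the analogous equalities hold for atomic and minimal atomic ≼-factorizations; and consequently the set of lengths, the set of minimal lengths, the set of atomic lengths, and the set of minimal atomic lengths of x computed in 𝓗 coincide with those computed in 𝓚. -/
open Pointwise

namespace FactPaper

section Divisors

variable {M : Type*} [Monoid M]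

theorem Dvd2.trans {a b c : M} (hab : Dvd2 a b) (hbc : Dvd2 b c) : Dvd2 a c := by
  obtain ⟨u, v, rfl⟩ := hab
  obtain ⟨s, t, rfl⟩ := hbc
  exact ⟨s * u, v * t, by simp only [mul_assoc]⟩

theorem dvd2_mul_right (a b : M) : Dvd2 a (a * b) := ⟨1, b, by rw [one_mul]⟩

theorem dvd2_mul_left (a b : M) : Dvd2 b (a * b) := ⟨a, 1, by rw [mul_one]⟩

theorem dvd2_prod_of_mem {l : List M} {a : M} (ha : a ∈ l) : Dvd2 a l.prod := by
  obtain ⟨p, q, rfl⟩ := List.append_of_mem ha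
  exact ⟨p.prod, q.prod, by simp [List.prod_append, mul_assoc]⟩

end Divisors

section Restriction

variable {H : Type*} [Monoid H] {r : H → H → Prop} {K : Submonoid H}

theorem rIrred_subRel_iff {a : K} (hdiv : ∀ y : H, Dvd2 y a → y ∈ K) :
    RIrred (SubRel r K) a ↔ RIrred r a := by
  refine and_congr Iff.rfl ⟨fun h y z hy hz hya hza hyz => ?_,
    fun h y z hy hz hya hza hyz => h y z hy hz hya hza (congrArg Subtype.val hyz)⟩
  have hyK : y ∈ K := hdiv y (hyz ▸ dvd2_mul_right y z)
  have hzK : z ∈ K := hdiv z (hyz ▸ dvd2_mul_left y z)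
  exact h ⟨y, hyK⟩ ⟨z, hzK⟩ hy hz hya hza (Subtype.ext hyz)

theorem rAtom_subRel_iff {a : K} (hdiv : ∀ y : H, Dvd2 y a → y ∈ K) :
    RAtom (SubRel r K) a ↔ RAtom r a := by
  refine and_congr Iff.rfl ⟨fun h y z hy hz hyz => ?_,
    fun h y z hy hz hyz => h y z hy hz (congrArg Subtype.val hyz)⟩
  have hyK : y ∈ K := hdiv y (hyz ▸ dvd2_mul_right y z)
  have hzK : z ∈ K := hdiv z (hyz ▸ dvd2_mul_left y z)
  exact h ⟨y, hyK⟩ ⟨z, hzK⟩ hy hz (Subtype.ext hyz)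

theorem wordLe_subRel_iff {l m : List K} :
    WordLe (SubRel r K) l m ↔ WordLe r (l.map Subtype.val) (m.map Subtype.val) := by
  have hl := l.length_map (Subtype.val : K → H)
  have hm := m.length_map (Subtype.val : K → H)
  constructor
  · rintro ⟨σ, hσ⟩
    refine ⟨((finCongr hl).toEmbedding.trans σ).trans (finCongr hm.symm).toEmbedding,
      fun i => ?_⟩
    simpa [SubRel, -List.map_subtype] using hσ (finCongr hl i)
  · rintro ⟨σ, hσ⟩
    refine ⟨((finCongr hl.symm).toEmbedding.trans σ).trans (finCongr hm).toEmbedding,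
      fun i => ?_⟩
    simpa [SubRel, -List.map_subtype] using hσ (finCongr hl.symm i)

end Restriction

section DivisorClosed

variable {H : Type*} [Monoid H] {r : H → H → Prop} {K : Submonoid H} {x : H}

theorem exists_map_val_eq_of_prod_eq (hK : ∀ y : H, Dvd2 y x → y ∈ K) {l : List H}
    (hl : l.prod = x) : ∃ l' : List K, l'.map Subtype.val = l := by
  lift l to List K using fun a ha => hK a (hl ▸ dvd2_prod_of_mem ha)
  exact ⟨l, rfl⟩

theorem prod_eq_mk_iff (hx : x ∈ K) (l : List K) :
    l.prod = ⟨x, hx⟩ ↔ (l.map Subtype.val).prod = x := by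
  rw [← Submonoid.coe_list_prod, Subtype.ext_iff]

/-- Letters of a factorization of `x` have all their divisors in `K`, so any property of
letters that only depends on their divisors is the same in `K` and in `H`. -/
theorem forall_mem_map_val_iff {P : K → Prop} {Q : H → Prop}
    (hPQ : ∀ a : K, (∀ y : H, Dvd2 y a → y ∈ K) → (P a ↔ Q a))
    (hK : ∀ y : H, Dvd2 y x → y ∈ K) {l : List K} (hl : (l.map Subtype.val).prod = x) :
    (∀ a ∈ l, P a) ↔ ∀ a ∈ l.map Subtype.val, Q a := by
  rw [List.forall_mem_map]
  refine forall₂_congr fun a ha => hPQ a fun y hy => hK y (hy.trans ?_)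
  exact hl ▸ dvd2_prod_of_mem (List.mem_map_of_mem ha)

theorem isFac_subRel_iff (hx : x ∈ K) (hK : ∀ y : H, Dvd2 y x → y ∈ K) (l : List K) :
    IsFac (SubRel r K) ⟨x, hx⟩ l ↔ IsFac r x (l.map Subtype.val) := by
  rw [IsFac, IsFac, prod_eq_mk_iff]
  exact and_congr_left fun hl => forall_mem_map_val_iff (fun _ => rIrred_subRel_iff) hK hl

theorem isAtomicFac_subRel_iff (hx : x ∈ K) (hK : ∀ y : H, Dvd2 y x → y ∈ K) (l : List K) :
    IsAtomicFac (SubRel r K) ⟨x, hx⟩ l ↔ IsAtomicFac r x (l.map Subtype.val) := by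
  rw [IsAtomicFac, IsAtomicFac, prod_eq_mk_iff]
  exact and_congr_left fun hl => forall_mem_map_val_iff (fun _ => rAtom_subRel_iff) hK hl

theorem isMinFac_subRel_iff (hx : x ∈ K) (hK : ∀ y : H, Dvd2 y x → y ∈ K) (l : List K) :
    IsMinFac (SubRel r K) ⟨x, hx⟩ l ↔ IsMinFac r x (l.map Subtype.val) := by
  refine and_congr (isFac_subRel_iff hx hK l) ⟨fun hmin m hm hml => ?_, fun hmin m hm hml => ?_⟩
  · obtain ⟨m, rfl⟩ := exists_map_val_eq_of_prod_eq hK hm.2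
    exact wordLe_subRel_iff.1 (hmin m ((isFac_subRel_iff hx hK m).2 hm) (wordLe_subRel_iff.2 hml))
  · exact wordLe_subRel_iff.2
      (hmin _ ((isFac_subRel_iff hx hK m).1 hm) (wordLe_subRel_iff.1 hml))

theorem isMinAtomicFac_subRel_iff (hx : x ∈ K) (hK : ∀ y : H, Dvd2 y x → y ∈ K)
    (l : List K) :
    IsMinAtomicFac (SubRel r K) ⟨x, hx⟩ l ↔ IsMinAtomicFac r x (l.map Subtype.val) := by
  rw [IsMinAtomicFac, IsMinAtomicFac, isMinFac_subRel_iff hx hK]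
  exact and_congr_right fun hl =>
    forall_mem_map_val_iff (fun _ => rAtom_subRel_iff) hK hl.1.2

end DivisorClosed

theorem setOf_length_eq_of_map {α β : Type*} {f : α → β} {P : List α → Prop}
    {Q : List β → Prop} (hPQ : ∀ l, P l ↔ Q (l.map f))
    (hlift : ∀ l, Q l → ∃ l' : List α, l'.map f = l) :
    {n : ℕ | ∃ l, Q l ∧ l.length = n} = {n : ℕ | ∃ l, P l ∧ l.length = n} := by
  ext n
  constructor
  · rintro ⟨_, hl, rfl⟩
    obtain ⟨l, rfl⟩ := hlift _ hl
    exact ⟨l, (hPQ l).2 hl, (l.length_map f).symm⟩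
  · rintro ⟨l, hl, rfl⟩
    exact ⟨l.map f, (hPQ l).1 hl, l.length_map f⟩

theorem stmt2_general {H : Type*} [Monoid H] (r : H → H → Prop)
    (x : H) (K : Submonoid H) (hx : x ∈ K) (hK : ∀ y : H, Dvd2 y x → y ∈ K) :
    (∀ l : List K, IsFac (SubRel r K) ⟨x, hx⟩ l ↔ IsFac r x (l.map Subtype.val)) ∧
    (∀ l : List H, IsFac r x l → ∃ l' : List K, l'.map Subtype.val = l) ∧
    (∀ l : List K, IsMinFac (SubRel r K) ⟨x, hx⟩ l ↔ IsMinFac r x (l.map Subtype.val)) ∧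
    (∀ l : List H, IsMinFac r x l → ∃ l' : List K, l'.map Subtype.val = l) ∧
    (∀ l : List K,
      IsAtomicFac (SubRel r K) ⟨x, hx⟩ l ↔ IsAtomicFac r x (l.map Subtype.val)) ∧
    (∀ l : List H, IsAtomicFac r x l → ∃ l' : List K, l'.map Subtype.val = l) ∧
    (∀ l : List K,
      IsMinAtomicFac (SubRel r K) ⟨x, hx⟩ l ↔ IsMinAtomicFac r x (l.map Subtype.val)) ∧
    (∀ l : List H, IsMinAtomicFac r x l → ∃ l' : List K, l'.map Subtype.val = l) ∧
    ({n : ℕ | ∃ l : List H, IsFac r x l ∧ l.length = n} =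
      {n : ℕ | ∃ l : List K, IsFac (SubRel r K) ⟨x, hx⟩ l ∧ l.length = n}) ∧
    ({n : ℕ | ∃ l : List H, IsMinFac r x l ∧ l.length = n} =
      {n : ℕ | ∃ l : List K, IsMinFac (SubRel r K) ⟨x, hx⟩ l ∧ l.length = n}) ∧
    ({n : ℕ | ∃ l : List H, IsAtomicFac r x l ∧ l.length = n} =
      {n : ℕ | ∃ l : List K, IsAtomicFac (SubRel r K) ⟨x, hx⟩ l ∧ l.length = n}) ∧
    ({n : ℕ | ∃ l : List H, IsMinAtomicFac r x l ∧ l.length = n} =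
      {n : ℕ | ∃ l : List K, IsMinAtomicFac (SubRel r K) ⟨x, hx⟩ l ∧ l.length = n}) := by
  have hFac := isFac_subRel_iff (r := r) hx hK
  have hMinFac := isMinFac_subRel_iff (r := r) hx hK
  have hAtomicFac := isAtomicFac_subRel_iff (r := r) hx hK
  have hMinAtomicFac := isMinAtomicFac_subRel_iff (r := r) hx hK
  have liftFac : ∀ l : List H, IsFac r x l → ∃ l' : List K, l'.map Subtype.val = l :=
    fun _ hl => exists_map_val_eq_of_prod_eq hK hl.2
  have liftMinFac : ∀ l : List H, IsMinFac r x l → ∃ l' : List K, l'.map Subtype.val = l :=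
    fun l hl => liftFac l hl.1
  have liftAtomicFac :
      ∀ l : List H, IsAtomicFac r x l → ∃ l' : List K, l'.map Subtype.val = l :=
    fun _ hl => exists_map_val_eq_of_prod_eq hK hl.2
  have liftMinAtomicFac :
      ∀ l : List H, IsMinAtomicFac r x l → ∃ l' : List K, l'.map Subtype.val = l :=
    fun l hl => liftMinFac l hl.1
  exact ⟨hFac, liftFac, hMinFac, liftMinFac, hAtomicFac, liftAtomicFac,
    hMinAtomicFac, liftMinAtomicFac, setOf_length_eq_of_map hFac liftFac,
    setOf_length_eq_of_map hMinFac liftMinFac, setOf_length_eq_of_map hAtomicFac liftAtomicFac,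
    setOf_length_eq_of_map hMinAtomicFac liftMinAtomicFac⟩

/-- Proposition 3.6(ii)–(v). If `K` is a submonoid of `H` containing
every `∣_H`-divisor of `x`, then the (minimal, atomic, minimal atomic) `≼`-factorizations
of `x` in `H` correspond exactly (under the inclusion `K → H` on letters) to those in
`K`, and the corresponding sets of lengths coincide. -/
theorem stmt2 {H : Type*} [Monoid H] (r : H → H → Prop)
    (hrefl : Reflexive r) (htrans : Transitive r)
    (x : H) (K : Submonoid H) (hx : x ∈ K) (hK : ∀ y : H, Dvd2 y x → y ∈ K) :
    (∀ l : List K, IsFac (SubRel r K) ⟨x, hx⟩ l ↔ IsFac r x (l.map Subtype.val)) ∧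
    (∀ l : List H, IsFac r x l → ∃ l' : List K, l'.map Subtype.val = l) ∧
    (∀ l : List K, IsMinFac (SubRel r K) ⟨x, hx⟩ l ↔ IsMinFac r x (l.map Subtype.val)) ∧
    (∀ l : List H, IsMinFac r x l → ∃ l' : List K, l'.map Subtype.val = l) ∧
    (∀ l : List K,
      IsAtomicFac (SubRel r K) ⟨x, hx⟩ l ↔ IsAtomicFac r x (l.map Subtype.val)) ∧
    (∀ l : List H, IsAtomicFac r x l → ∃ l' : List K, l'.map Subtype.val = l) ∧
    (∀ l : List K,
      IsMinAtomicFac (SubRel r K) ⟨x, hx⟩ l ↔ IsMinAtomicFac r x (l.map Subtype.val)) ∧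
    (∀ l : List H, IsMinAtomicFac r x l → ∃ l' : List K, l'.map Subtype.val = l) ∧
    ({n : ℕ | ∃ l : List H, IsFac r x l ∧ l.length = n} =
      {n : ℕ | ∃ l : List K, IsFac (SubRel r K) ⟨x, hx⟩ l ∧ l.length = n}) ∧
    ({n : ℕ | ∃ l : List H, IsMinFac r x l ∧ l.length = n} =
      {n : ℕ | ∃ l : List K, IsMinFac (SubRel r K) ⟨x, hx⟩ l ∧ l.length = n}) ∧
    ({n : ℕ | ∃ l : List H, IsAtomicFac r x l ∧ l.length = n} =
      {n : ℕ | ∃ l : List K, IsAtomicFac (SubRel r K) ⟨x, hx⟩ l ∧ l.length = n}) ∧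
    ({n : ℕ | ∃ l : List H, IsMinAtomicFac r x l ∧ l.length = n} =
      {n : ℕ | ∃ l : List K, IsMinAtomicFac (SubRel r K) ⟨x, hx⟩ l ∧ l.length = n}) :=
  stmt2_general r x K hx hK

end FactPaper
end

section
/- Let 𝓗 = (H, ≼) be a premonoid and 𝓚 = (K, ≼_K) a subpremonoid of 𝓗 such that K is a divisor-closed submonoid of H. Then 𝓘(𝓚) = K ∩ 𝓘(𝓗) and 𝓐(𝓚) = K ∩ 𝓐(𝓗). -/
open Pointwise

namespace FactPaper

/-- Corollary 3.7. If `K` is a divisor-closed submonoid of `H`, then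
the `≼_K`-irreducibles of `K` are exactly the `≼`-irreducibles of `H` lying in `K`, and
likewise for atoms: `𝓘(𝓚) = K ∩ 𝓘(𝓗)` and `𝓐(𝓚) = K ∩ 𝓐(𝓗)`. -/
theorem stmt3 {H : Type*} [Monoid H] (r : H → H → Prop)
    (hrefl : Reflexive r) (htrans : Transitive r)
    (K : Submonoid H) (hdc : ∀ a b : H, b ∈ K → Dvd2 a b → a ∈ K) :
    (∀ a : H, (∃ ha : a ∈ K, RIrred (SubRel r K) ⟨a, ha⟩) ↔ a ∈ K ∧ RIrred r a) ∧
    (∀ a : H, (∃ ha : a ∈ K, RAtom (SubRel r K) ⟨a, ha⟩) ↔ a ∈ K ∧ RAtom r a) := by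
  have hsub : ∀ (a : K), RNonUnit (SubRel r K) a ↔ RNonUnit r (a : H) := by
    intro a
    unfold RNonUnit RUnit SubRel
    simp
  constructor
  · intro a
    constructor
    · rintro ⟨ha, hnu, hirr⟩
      refine ⟨ha, (hsub ⟨a, ha⟩).mp hnu, ?_⟩
      intro y z hy hz hya hza heq
      have hyK : y ∈ K := hdc y a ha ⟨1, z, by simp [heq, mul_assoc]⟩
      have hzK : z ∈ K := hdc z a ha ⟨y, 1, by simp [heq]⟩
      exact hirr ⟨y, hyK⟩ ⟨z, hzK⟩ ((hsub _).mpr hy) ((hsub _).mpr hz) hya hza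
        (Subtype.ext heq)
    · rintro ⟨ha, hnu, hirr⟩
      refine ⟨ha, (hsub ⟨a, ha⟩).mpr hnu, ?_⟩
      intro y z hy hz hya hza heq
      exact hirr (y : H) (z : H) ((hsub _).mp hy) ((hsub _).mp hz) hya hza
        (congrArg Subtype.val heq)
  · intro a
    constructor
    · rintro ⟨ha, hnu, hat⟩
      refine ⟨ha, (hsub ⟨a, ha⟩).mp hnu, ?_⟩
      intro y z hy hz heq
      have hyK : y ∈ K := hdc y a ha ⟨1, z, by simp [heq, mul_assoc]⟩
      have hzK : z ∈ K := hdc z a ha ⟨y, 1, by simp [heq]⟩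
      exact hat ⟨y, hyK⟩ ⟨z, hzK⟩ ((hsub _).mpr hy) ((hsub _).mpr hz) (Subtype.ext heq)
    · rintro ⟨ha, hnu, hat⟩
      refine ⟨ha, (hsub ⟨a, ha⟩).mpr hnu, ?_⟩
      intro y z hy hz heq
      exact hat (y : H) (z : H) ((hsub _).mp hy) ((hsub _).mp hz)
        (congrArg Subtype.val heq)

end FactPaper
end

section
/- Let 𝓗 = (H, ≼) be a premonoid. Then 𝓗 is factorable if and only if ⟦x⟧_𝓗 is factorable for every ≼-non-unit x of H; and 𝓗 is atomic if and only if ⟦x⟧_𝓗 is atomic for every ≼-non-unit x of H. -/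
open Pointwise

namespace FactPaper

-- aux lemmas
lemma dvd2_of_mem_prod {M : Type*} [Monoid M] {a : M} {l : List M} (h : a ∈ l) :
    Dvd2 a l.prod := by
  obtain ⟨s, t, rfl⟩ := List.append_of_mem h
  exact ⟨s.prod, t.prod, by rw [List.prod_append, List.prod_cons, mul_assoc]⟩

lemma runit_sub {M : Type*} [Monoid M] (r : M → M → Prop) (K : Submonoid M) (u : K) :
    RUnit (SubRel r K) u ↔ RUnit r (u : M) := by
  simp [RUnit, SubRel]

lemma nonunit_sub {M : Type*} [Monoid M] (r : M → M → Prop) (K : Submonoid M) (u : K) :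
    RNonUnit (SubRel r K) u ↔ RNonUnit r (u : M) := by
  simp [RNonUnit, runit_sub]

/-- Corollary 3.8, for factorability and atomicity. A premonoid
`(H, ≼)` is factorable (resp. atomic) if and only if, for every `≼`-non-unit `x`, the
subpremonoid `⟦x⟧` (the smallest divisor-closed submonoid containing `x`, with the
restricted preorder) is factorable (resp. atomic). -/
theorem stmt4 {H : Type*} [Monoid H] (r : H → H → Prop)
    (hrefl : Reflexive r) (htrans : Transitive r) :
    (Factorable r ↔ ∀ x : H, RNonUnit r x → Factorable (SubRel r (DCSub x))) ∧
    (Atomic r ↔ ∀ x : H, RNonUnit r x → Atomic (SubRel r (DCSub x))) := by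
  constructor
  · constructor
    · intro hF x hx y hy
      rw [nonunit_sub] at hy
      obtain ⟨l, hne, hirr, hprod⟩ := hF (y : H) hy
      have hmem : ∀ a ∈ l, a ∈ DCSub x := fun a ha =>
        InDC.dvd (hprod ▸ y.2) (dvd2_of_mem_prod ha)
      refine ⟨l.attach.map (fun a => (⟨a.1, hmem a.1 a.2⟩ : DCSub x)), ?_, ?_, ?_⟩
      · simp [hne]
      · intro b hbl
        simp only [List.mem_map, List.mem_attach, true_and] at hbl
        obtain ⟨⟨a, ha⟩, rfl⟩ := hbl
        obtain ⟨h1, h2⟩ := hirr a ha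
        refine ⟨(nonunit_sub ..).2 h1, ?_⟩
        intro y1 z1 hy1 hz1 hlt1 hlt2 heq2
        exact h2 y1.1 z1.1 ((nonunit_sub ..).1 hy1) ((nonunit_sub ..).1 hz1) hlt1 hlt2
          (congrArg Subtype.val heq2)
      · apply Subtype.ext
        rw [SubmonoidClass.coe_list_prod, List.map_map]
        simpa using hprod
    · intro h x hx
      obtain ⟨l, hne, hirr, hprod⟩ :=
        h x hx ⟨x, InDC.base⟩ ((nonunit_sub ..).2 hx)
      refine ⟨l.map Subtype.val, fun hh => hne (List.eq_nil_of_length_eq_zero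
        (by simpa using congrArg List.length hh)), ?_, ?_⟩
      · rintro a ha
        simp only [List.mem_map] at ha
        obtain ⟨⟨a, haK⟩, hal, rfl⟩ := ha
        obtain ⟨h1, h2⟩ := hirr _ hal
        refine ⟨(nonunit_sub ..).1 h1, ?_⟩
        intro y z hy hz hlt1 hlt2 heq
        have hyK : y ∈ DCSub x := InDC.dvd haK ⟨1, z, by rw [one_mul]; exact heq⟩
        have hzK : z ∈ DCSub x := InDC.dvd haK ⟨y, 1, by rw [mul_one]; exact heq⟩
        exact h2 ⟨y, hyK⟩ ⟨z, hzK⟩ ((nonunit_sub ..).2 hy) ((nonunit_sub ..).2 hz)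
          hlt1 hlt2 (Subtype.ext heq)
      · rw [← SubmonoidClass.coe_list_prod, hprod]
  · constructor
    · intro hF x hx y hy
      rw [nonunit_sub] at hy
      obtain ⟨l, hne, hirr, hprod⟩ := hF (y : H) hy
      have hmem : ∀ a ∈ l, a ∈ DCSub x := fun a ha =>
        InDC.dvd (hprod ▸ y.2) (dvd2_of_mem_prod ha)
      refine ⟨l.attach.map (fun a => (⟨a.1, hmem a.1 a.2⟩ : DCSub x)), ?_, ?_, ?_⟩
      · simp [hne]
      · intro b hbl
        simp only [List.mem_map, List.mem_attach, true_and] at hbl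
        obtain ⟨⟨a, ha⟩, rfl⟩ := hbl
        obtain ⟨h1, h2⟩ := hirr a ha
        refine ⟨(nonunit_sub ..).2 h1, ?_⟩
        intro y1 z1 hy1 hz1 heq2
        exact h2 y1.1 z1.1 ((nonunit_sub ..).1 hy1) ((nonunit_sub ..).1 hz1)
          (congrArg Subtype.val heq2)
      · apply Subtype.ext
        rw [SubmonoidClass.coe_list_prod, List.map_map]
        simpa using hprod
    · intro h x hx
      obtain ⟨l, hne, hirr, hprod⟩ :=
        h x hx ⟨x, InDC.base⟩ ((nonunit_sub ..).2 hx)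
      refine ⟨l.map Subtype.val, fun hh => hne (List.eq_nil_of_length_eq_zero
        (by simpa using congrArg List.length hh)), ?_, ?_⟩
      · rintro a ha
        simp only [List.mem_map] at ha
        obtain ⟨⟨a, haK⟩, hal, rfl⟩ := ha
        obtain ⟨h1, h2⟩ := hirr _ hal
        refine ⟨(nonunit_sub ..).1 h1, ?_⟩
        intro y z hy hz heq
        have hyK : y ∈ DCSub x := InDC.dvd haK ⟨1, z, by rw [one_mul]; exact heq⟩
        have hzK : z ∈ DCSub x := InDC.dvd haK ⟨y, 1, by rw [mul_one]; exact heq⟩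
        exact h2 ⟨y, hyK⟩ ⟨z, hzK⟩ ((nonunit_sub ..).2 hy) ((nonunit_sub ..).2 hz)
          (Subtype.ext heq)
      · rw [← SubmonoidClass.coe_list_prod, hprod]


end FactPaper
end

section
/- Every germ of an f.g.u. premonoid is itself an f.g.u. premonoid: if 𝓗 = (H, ≼) is a premonoid such that H = ⟨𝓗^× A 𝓗^×⟩_H for some finite A ⊆ H, then for every x ∈ H the germ ⟨⟨x⟩⟩_𝓗 of 𝓗 at x is f.g.u. -/
open Pointwise

namespace FactPaper

/-- Lemma 4.2. Every germ of an f.g.u. premonoid is itself f.g.u.: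
if `(H, ≼)` is f.g.u., then for every `x ∈ H` the germ of `(H, ≼)` at `x` (the
submonoid generated by the `∣_H`-divisors of `x`, with the restricted preorder) is
f.g.u. -/
theorem stmt5 {H : Type*} [Monoid H] (r : H → H → Prop)
    (hrefl : Reflexive r) (htrans : Transitive r) (hfgu : IsFGU r) :
    ∀ x : H, IsFGU (SubRel r (GermSub x)) := by
  intro x
  obtain ⟨A, hAfin, hAtop⟩ := hfgu
  set K : Submonoid H := GermSub x with hK
  have dvdtrans : ∀ {a b c : H}, Dvd2 a b → Dvd2 b c → Dvd2 a c := by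
    rintro a b c ⟨p, q, rfl⟩ ⟨s, t, rfl⟩
    exact ⟨s * p, q * t, by simp [mul_assoc]⟩
  set A' : Set K := {a : K | (a : H) ∈ A ∧ Dvd2 (a : H) x} with hA'
  have hA'fin : A'.Finite := by
    have : A' = Subtype.val ⁻¹' (A ∩ {y : H | Dvd2 y x}) := rfl
    rw [this]
    exact Set.Finite.preimage Subtype.coe_injective.injOn (hAfin.inter_of_left _)
  refine ⟨A', hA'fin, ?_⟩
  set S : Set K := {w : K | ∃ u a v : K, RUnit (SubRel r K) u ∧ a ∈ A' ∧
    RUnit (SubRel r K) v ∧ w = u * a * v} with hS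
  set T : Set H := {w : H | ∃ u a v : H, RUnit r u ∧ a ∈ A ∧ RUnit r v ∧ w = u * a * v}
    with hT
  -- every element of T dividing x lies in the mapped closure
  have hTmem : ∀ w : H, w ∈ T → Dvd2 w x →
      w ∈ (Submonoid.closure S).map K.subtype := by
    rintro w ⟨u, a, v, hu, haA, hv, rfl⟩ hwx
    have hux : Dvd2 u x := dvdtrans ⟨1, a * v, by simp [mul_assoc]⟩ hwx
    have hax : Dvd2 a x := dvdtrans ⟨u, v, rfl⟩ hwx
    have hvx : Dvd2 v x := dvdtrans ⟨u * a, 1, by simp [mul_assoc]⟩ hwx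
    have huK : u ∈ K := Submonoid.subset_closure hux
    have haK : a ∈ K := Submonoid.subset_closure hax
    have hvK : v ∈ K := Submonoid.subset_closure hvx
    refine ⟨⟨u, huK⟩ * ⟨a, haK⟩ * ⟨v, hvK⟩, Submonoid.subset_closure ?_, rfl⟩
    exact ⟨⟨u, huK⟩, ⟨a, haK⟩, ⟨v, hvK⟩, ⟨hu.1, hu.2⟩, ⟨haA, hax⟩, ⟨hv.1, hv.2⟩, rfl⟩
  -- products of such elements lie in the mapped closure
  have hlist : ∀ L : List H, (∀ w ∈ L, w ∈ T ∧ Dvd2 w x) →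
      L.prod ∈ (Submonoid.closure S).map K.subtype := by
    intro L
    induction L with
    | nil => intro _; simpa using one_mem _
    | cons w L ih =>
      intro hmem
      rw [List.prod_cons]
      exact mul_mem (hTmem w (hmem w (by simp)).1 (hmem w (by simp)).2)
        (ih fun z hz => hmem z (by simp [hz]))
  -- every divisor of x lies in the mapped closure
  have hdiv : ∀ y : H, Dvd2 y x → y ∈ (Submonoid.closure S).map K.subtype := by
    intro y hyx
    have hy : y ∈ Submonoid.closure T := by rw [hAtop]; trivial
    obtain ⟨L, hLT, hLprod⟩ := Submonoid.exists_list_of_mem_closure hy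
    have hwx : ∀ w ∈ L, w ∈ T ∧ Dvd2 w x := by
      intro w hw
      obtain ⟨s, t, rfl⟩ := List.append_of_mem hw
      refine ⟨hLT w hw, dvdtrans ⟨s.prod, t.prod, ?_⟩ (hLprod ▸ hyx)⟩
      simp [List.prod_append, mul_assoc]
    rw [← hLprod]
    exact hlist L hwx
  have hle : K ≤ (Submonoid.closure S).map K.subtype := by
    show Submonoid.closure {y : H | Dvd2 y x} ≤ _
    exact Submonoid.closure_le.2 fun y hy => hdiv y hy
  rw [eq_top_iff]
  rintro z -
  obtain ⟨w, hw, hwz⟩ := hle z.2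
  have : w = z := Subtype.ext hwz
  rwa [← this]

end FactPaper
end

section
/- Let A and Q be subsets of a monoid H. If Q² ⊆ Q, then ⟨QAQ⟩_H ⊆ Q ∪ ⟨Q(A ∖ Q)Q⟩_H. -/
open Pointwise

namespace FactPaper

/-- Lemma 4.6. If `A, Q ⊆ H` and `Q² ⊆ Q`, then
`⟨QAQ⟩_H ⊆ Q ∪ ⟨Q(A \ Q)Q⟩_H`. -/
theorem stmt7 {H : Type*} [Monoid H] (A Q : Set H) (hQ : Q * Q ⊆ Q) :
    (Submonoid.closure (Q * A * Q) : Set H) ⊆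
      Q ∪ (Submonoid.closure (Q * (A \ Q) * Q) : Set H) := by
  classical
  set S := Q * (A \ Q) * Q with hS
  set T := {x : H | ∃ l : List H, l ≠ [] ∧ (∀ a ∈ l, a ∈ S) ∧ l.prod = x} with hT
  have hQS : ∀ q ∈ Q, ∀ s ∈ S, q * s ∈ S := by
    rintro q hq s hs
    obtain ⟨qa, hqa, q2, hq2, rfl⟩ := hs
    obtain ⟨q1, hq1, a, ha, rfl⟩ := hqa
    exact ⟨q * q1 * a, ⟨q * q1, hQ (Set.mul_mem_mul hq hq1), a, ha, rfl⟩, q2, hq2, by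
      simp [mul_assoc]⟩
  have hSQ : ∀ s ∈ S, ∀ q ∈ Q, s * q ∈ S := by
    rintro s hs q hq
    obtain ⟨qa, hqa, q2, hq2, rfl⟩ := hs
    exact ⟨qa, hqa, q2 * q, hQ (Set.mul_mem_mul hq2 hq), (mul_assoc _ _ _).symm⟩
  have hQT : ∀ q ∈ Q, ∀ t ∈ T, q * t ∈ T := by
    rintro q hq t ⟨l, hne, hl, rfl⟩
    cases l with
    | nil => exact absurd rfl hne
    | cons s rest =>
      refine ⟨(q * s) :: rest, by simp, ?_, by simp [List.prod_cons, mul_assoc]⟩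
      intro a ha
      rcases List.mem_cons.mp ha with h | h
      · exact h ▸ hQS q hq s (hl s (by simp))
      · exact hl a (by simp [h])
  have hTQ : ∀ t ∈ T, ∀ q ∈ Q, t * q ∈ T := by
    rintro t ⟨l, hne, hl, rfl⟩ q hq
    rcases List.eq_nil_or_concat l with rfl | ⟨rest, s, rfl⟩
    · exact absurd rfl hne
    refine ⟨rest ++ [s * q], by simp, ?_, by simp [List.prod_concat, mul_assoc]⟩
    intro a ha
    rcases List.mem_append.mp ha with h | h
    · exact hl a (by simp [h])
    · simp at h
      exact h ▸ hSQ s (hl s (by simp)) q hq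
  have hTT : ∀ x ∈ T, ∀ y ∈ T, x * y ∈ T := by
    rintro x ⟨l, hne, hl, rfl⟩ y ⟨m, hmne, hm, rfl⟩
    refine ⟨l ++ m, by simp [hne], ?_, by simp⟩
    intro a ha
    rcases List.mem_append.mp ha with h | h
    · exact hl a h
    · exact hm a h
  intro x hx
  have key : x ∈ Q ∨ x ∈ T ∨ x = 1 := by
    induction hx using Submonoid.closure_induction with
    | mem y hy =>
      obtain ⟨qa, hqa, q2, hq2, rfl⟩ := hy
      obtain ⟨q1, hq1, a, ha, rfl⟩ := hqa
      by_cases haQ : a ∈ Q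
      · exact Or.inl (hQ (Set.mul_mem_mul (hQ (Set.mul_mem_mul hq1 haQ)) hq2))
      · exact Or.inr (Or.inl ⟨[q1 * a * q2], by simp,
          by rintro b hb; simp at hb; exact hb ▸ ⟨q1 * a, ⟨q1, hq1, a, ⟨ha, haQ⟩, rfl⟩, q2, hq2, rfl⟩,
          by simp⟩)
    | one => exact Or.inr (Or.inr rfl)
    | mul a b _ _ iha ihb =>
      rcases iha with ha | ha | rfl
      · rcases ihb with hb | hb | rfl
        · exact Or.inl (hQ (Set.mul_mem_mul ha hb))
        · exact Or.inr (Or.inl (hQT a ha b hb))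
        · simpa using Or.inl ha
      · rcases ihb with hb | hb | rfl
        · exact Or.inr (Or.inl (hTQ a ha b hb))
        · exact Or.inr (Or.inl (hTT a ha b hb))
        · simpa using Or.inr (Or.inl ha)
      · rcases ihb with hb | hb | rfl
        · simpa using Or.inl hb
        · simpa using Or.inr (Or.inl hb)
        · exact Or.inr (Or.inr (by simp))
  rcases key with h | h | rfl
  · exact Or.inl h
  · obtain ⟨l, _, hl, rfl⟩ := h
    exact Or.inr (Submonoid.list_prod_mem _ (fun a ha => Submonoid.subset_closure (hl a ha)))
  · exact Or.inr (Submonoid.one_mem _)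

end FactPaper
end

section
/- Let 𝓗 = (H, ≼) be an f.g.u. weakly positive monoid. Then there exists a finite set A of ≼-irreducibles such that every ≼-non-unit of H can be written as a non-empty product of elements of 𝓘(𝓗) ∩ 𝓗^× A 𝓗^×. In particular, 𝓗 is factorable. -/
open Pointwise

namespace FactPaper

/-!
Let `X` be a finite set with `H = ⟨𝓗^× X 𝓗^×⟩`. In a weakly positive monoid every factor
of a product lies `≼`-below it, and `u a v` is `≼`-equivalent to `a` for units `u, v`. Hence
the number of `a ∈ X` with `a ≼ x` never increases when passing to a factor of `x`, and
drops strictly when passing from `u a v` to some `y ≺ u a v`. By strong induction on this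
number, each non-unit `u a v` is either `≼`-irreducible (and then so is `a`) or splits into
two strictly smaller non-units; an arbitrary non-unit is a product of such `u a v`, with the
unit factors absorbed into their neighbours.
-/

section

variable {H : Type*} {r : H → H → Prop}

theorem ncard_sep_le_lt_ncard_sep_le (htrans : Transitive r) {X : Set H} (hX : X.Finite)
    {a x y : H} (ha : a ∈ X) (hya : RLt r y a) (hax : r a x) :
    {b ∈ X | r b y}.ncard < {b ∈ X | r b x}.ncard := by
  refine Set.ncard_lt_ncard ⟨fun b ⟨hb, hby⟩ => ⟨hb, htrans hby (htrans hya.1 hax)⟩, ?_⟩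
    (hX.subset (Set.sep_subset _ _))
  exact fun h => hya.2 (h ⟨ha, hax⟩).2

variable [Monoid H]

def unitSandwich (r : H → H → Prop) (X : Set H) : Set H :=
  {w | ∃ u a v : H, RUnit r u ∧ a ∈ X ∧ RUnit r v ∧ w = u * a * v}

def IrredProdOver (r : H → H → Prop) (X : Set H) (x : H) : Prop :=
  ∃ l : List H, l ≠ [] ∧ (∀ b ∈ l, RIrred r b ∧ b ∈ unitSandwich r X) ∧ l.prod = x

theorem IrredProdOver.mul {X : Set H} {x y : H} (hx : IrredProdOver r X x)
    (hy : IrredProdOver r X y) : IrredProdOver r X (x * y) := by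
  obtain ⟨l₁, hl₁, hb₁, rfl⟩ := hx
  obtain ⟨l₂, -, hb₂, rfl⟩ := hy
  refine ⟨l₁ ++ l₂, by simp [hl₁], fun b hb => ?_, List.prod_append⟩
  exact (List.mem_append.mp hb).elim (hb₁ b) (hb₂ b)

namespace WeaklyPositive

variable (hwp : WeaklyPositive r)
include hwp

theorem le_mul_mul (x a b : H) : r x (a * x * b) := hwp.2 x a b

theorem mul_mul_le {u v : H} (hu : RUnit r u) (hv : RUnit r v) (x : H) : r (u * x * v) x :=
  hwp.1 x u v hu hv

theorem le_mul_left (x a : H) : r x (a * x) := by simpa using hwp.le_mul_mul x a 1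

theorem le_mul_right (x b : H) : r x (x * b) := by simpa using hwp.le_mul_mul x 1 b

theorem one_le (x : H) : r 1 x := by simpa using hwp.le_mul_left 1 x

theorem rUnit_one : RUnit r (1 : H) := ⟨hwp.one_le 1, hwp.one_le 1⟩

theorem rUnit_of_le_one {u : H} (h : r u 1) : RUnit r u := ⟨h, hwp.one_le u⟩

theorem rUnit_mul {u v : H} (hu : RUnit r u) (hv : RUnit r v) : RUnit r (u * v) :=
  hwp.rUnit_of_le_one (by simpa using hwp.mul_mul_le hu hv 1)

theorem le_prod_of_mem {l : List H} {p : H} (hp : p ∈ l) : r p l.prod := by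
  obtain ⟨s, t, rfl⟩ := List.append_of_mem hp
  simpa [List.prod_append, mul_assoc] using hwp.le_mul_mul p s.prod t.prod

theorem mul_mul_mem_unitSandwich {X : Set H} {s w w' : H} (hs : s ∈ unitSandwich r X)
    (hw : RUnit r w) (hw' : RUnit r w') : w * s * w' ∈ unitSandwich r X := by
  obtain ⟨u, a, v, hu, ha, hv, rfl⟩ := hs
  exact ⟨w * u, a, v * w', hwp.rUnit_mul hw hu, ha, hwp.rUnit_mul hv hw',
    by simp only [mul_assoc]⟩

variable (htrans : Transitive r)
include htrans

theorem rNonUnit_of_le {x y : H} (hxy : r x y) (hx : RNonUnit r x) : RNonUnit r y :=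
  fun hy => hx (hwp.rUnit_of_le_one (htrans hxy hy.1))

theorem rIrred_of_rIrred_mul_mul {u a v : H} (hu : RUnit r u) (hv : RUnit r v)
    (hx : RIrred r (u * a * v)) : RIrred r a := by
  have hxa : r (u * a * v) a := hwp.mul_mul_le hu hv a
  have hax : r a (u * a * v) := hwp.le_mul_mul a u v
  refine ⟨fun ha => hx.1 (hwp.rUnit_of_le_one (htrans hxa ha.1)), ?_⟩
  rintro y z hy hz ⟨hya, hay⟩ ⟨hza, haz⟩ rfl
  have huy : r (u * y) y := by simpa using hwp.mul_mul_le hu hwp.rUnit_one y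
  have hzv : r (z * v) z := by simpa using hwp.mul_mul_le hwp.rUnit_one hv z
  refine hx.2 (u * y) (z * v) (hwp.rNonUnit_of_le htrans (hwp.le_mul_left y u) hy)
    (hwp.rNonUnit_of_le htrans (hwp.le_mul_right z v) hz)
    ⟨htrans huy (htrans hya hax), fun h => hay (htrans hax (htrans h huy))⟩
    ⟨htrans hzv (htrans hza hax), fun h => haz (htrans hax (htrans h hzv))⟩ ?_
  simp only [mul_assoc]

theorem irredProdOver_of_mem_unitSandwich {X : Set H} {s : H} (hs : s ∈ unitSandwich r X)
    (hsnu : RNonUnit r s)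
    (ih : ∀ y, RNonUnit r y → RLt r y s → IrredProdOver r {a ∈ X | RIrred r a} y) :
    IrredProdOver r {a ∈ X | RIrred r a} s := by
  by_cases hirr : RIrred r s
  · obtain ⟨u, a, v, hu, ha, hv, rfl⟩ := hs
    refine ⟨[u * a * v], by simp, ?_, by simp⟩
    simp only [List.mem_singleton, forall_eq]
    exact ⟨hirr, u, a, v, hu, ⟨ha, hwp.rIrred_of_rIrred_mul_mul htrans hu hv hirr⟩, hv, rfl⟩
  · simp only [RIrred, hsnu, true_and, not_forall, not_not] at hirr
    obtain ⟨y, z, hy, hz, hys, hzs, rfl⟩ := hirr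
    exact (ih y hy hys).mul (ih z hz hzs)

theorem irredProdOver_of_forall_unitSandwich_le {X Y : Set H}
    (hgen : Submonoid.closure (unitSandwich r X) = ⊤) {x : H} (hx : RNonUnit r x)
    (h : ∀ s ∈ unitSandwich r X, r s x → RNonUnit r s → IrredProdOver r Y s) :
    IrredProdOver r Y x := by
  have hmem : x ∈ Submonoid.closure {s ∈ unitSandwich r X | r s x} := by
    obtain ⟨l, hl, rfl⟩ := Submonoid.exists_list_of_mem_closure (hgen ▸ Submonoid.mem_top x)
    exact Submonoid.list_prod_mem _ fun s hs =>
      Submonoid.subset_closure ⟨hl s hs, hwp.le_prod_of_mem hs⟩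
  -- Unit factors must be absorbed into a neighbouring factor, so the induction tracks all
  -- two-sided unit multiples of each partial product.
  suffices ∀ y ∈ Submonoid.closure {s ∈ unitSandwich r X | r s x},
      RUnit r y ∨ ∀ w w', RUnit r w → RUnit r w' → IrredProdOver r Y (w * y * w') by
    simpa using (this x hmem).resolve_left hx 1 1 hwp.rUnit_one hwp.rUnit_one
  intro y hy
  induction hy using Submonoid.closure_induction with
  | mem s hs =>
    refine or_iff_not_imp_left.mpr fun hsnu w w' hw hw' => h _ ?_ ?_ ?_
    · exact hwp.mul_mul_mem_unitSandwich hs.1 hw hw'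
    · exact htrans (hwp.mul_mul_le hw hw' s) hs.2
    · exact hwp.rNonUnit_of_le htrans (hwp.le_mul_mul s w w') hsnu
  | one => exact .inl hwp.rUnit_one
  | mul y z _ _ hy hz =>
    rcases hy with hy | hy <;> rcases hz with hz | hz
    · exact .inl (hwp.rUnit_mul hy hz)
    · exact .inr fun w w' hw hw' => by
        simpa [mul_assoc] using hz (w * y) w' (hwp.rUnit_mul hw hy) hw'
    · exact .inr fun w w' hw hw' => by
        simpa [mul_assoc] using hy w (z * w') hw (hwp.rUnit_mul hz hw')
    · exact .inr fun w w' hw hw' => by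
        simpa [mul_assoc] using (hy w 1 hw hwp.rUnit_one).mul (hz 1 w' hwp.rUnit_one hw')

theorem irredProdOver_of_rNonUnit {X : Set H} (hX : X.Finite)
    (hgen : Submonoid.closure (unitSandwich r X) = ⊤) {x : H} (hx : RNonUnit r x) :
    IrredProdOver r {a ∈ X | RIrred r a} x := by
  induction hn : {b ∈ X | r b x}.ncard using Nat.strong_induction_on generalizing x with
  | _ n ih =>
  refine hwp.irredProdOver_of_forall_unitSandwich_le htrans hgen hx fun s hs hsx hsnu => ?_
  refine hwp.irredProdOver_of_mem_unitSandwich htrans hs hsnu fun y hy hys => ?_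
  obtain ⟨u, a, v, hu, ha, hv, rfl⟩ := hs
  have hsa : r (u * a * v) a := hwp.mul_mul_le hu hv a
  have hya : RLt r y a := ⟨htrans hys.1 hsa, fun h => hys.2 (htrans hsa h)⟩
  have hax : r a x := htrans (hwp.le_mul_mul a u v) hsx
  exact ih _ (hn ▸ ncard_sep_le_lt_ncard_sep_le htrans hX ha hya hax) hy rfl

end WeaklyPositive

end

theorem stmt8_general {H : Type*} [Monoid H] (r : H → H → Prop)
    (htrans : Transitive r)
    (hwp : WeaklyPositive r) (hfgu : IsFGU r) :
    (∃ A : Set H, A.Finite ∧ (∀ a ∈ A, RIrred r a) ∧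
      ∀ x : H, RNonUnit r x →
        ∃ l : List H, l ≠ [] ∧
          (∀ b ∈ l, RIrred r b ∧
            ∃ u a v : H, RUnit r u ∧ a ∈ A ∧ RUnit r v ∧ b = u * a * v) ∧
          l.prod = x) ∧
    Factorable r := by
  obtain ⟨X, hX, hgen⟩ := hfgu
  have key : ∀ x, RNonUnit r x → IrredProdOver r {a ∈ X | RIrred r a} x :=
    fun x hx => hwp.irredProdOver_of_rNonUnit htrans hX hgen hx
  refine ⟨⟨{a ∈ X | RIrred r a}, hX.subset (Set.sep_subset _ _), fun a ha => ha.2, key⟩,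
    fun x hx => ?_⟩
  obtain ⟨l, hl, hb, hprod⟩ := key x hx
  exact ⟨l, hl, fun b hb' => (hb b hb').1, hprod⟩

/-- Theorem 4.7. Let `(H, ≼)` be an f.g.u. weakly positive monoid.
Then there is a finite set `A` of `≼`-irreducibles such that every `≼`-non-unit is a
non-empty product of elements of `𝓘(𝓗) ∩ 𝓗^× A 𝓗^×`. In particular, `(H, ≼)` is
factorable. -/
theorem stmt8 {H : Type*} [Monoid H] (r : H → H → Prop)
    (hrefl : Reflexive r) (htrans : Transitive r)
    (hwp : WeaklyPositive r) (hfgu : IsFGU r) :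
    (∃ A : Set H, A.Finite ∧ (∀ a ∈ A, RIrred r a) ∧
      ∀ x : H, RNonUnit r x →
        ∃ l : List H, l ≠ [] ∧
          (∀ b ∈ l, RIrred r b ∧
            ∃ u a v : H, RUnit r u ∧ a ∈ A ∧ RUnit r v ∧ b = u * a * v) ∧
          l.prod = x) ∧
    Factorable r :=
  stmt8_general r htrans hwp hfgu

end FactPaper
end

section
/- Let 𝓗 = (H, ≼) be a loft premonoid. Then 𝓗 is BF-factorable if and only if it is FF-factorable; and 𝓗 is BmF-factorable if and only if it is FmF-factorable. -/
open Pointwise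

namespace FactPaper

section Aux

variable {M : Type*} [Monoid M] {r : M → M → Prop}

lemma wordLe_length {l m : List M} (h : WordLe r l m) : l.length ≤ m.length := by
  obtain ⟨σ, -⟩ := h
  simpa using Fintype.card_le_of_embedding σ

lemma wordLe_trans (htrans : Transitive r) {l m n : List M}
    (h1 : WordLe r l m) (h2 : WordLe r m n) : WordLe r l n := by
  obtain ⟨σ, hσ⟩ := h1
  obtain ⟨τ, hτ⟩ := h2
  exact ⟨σ.trans τ, fun i =>
    ⟨htrans (hσ i).1 (hτ (σ i)).1, htrans (hτ (σ i)).2 (hσ i).2⟩⟩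

lemma wordEquiv_symm {l m : List M} (h : WordEquiv r l m) : WordEquiv r m l :=
  ⟨h.2, h.1⟩

lemma wordEquiv_trans (htrans : Transitive r) {l m n : List M}
    (h1 : WordEquiv r l m) (h2 : WordEquiv r m n) : WordEquiv r l n :=
  ⟨wordLe_trans htrans h1.1 h2.1, wordLe_trans htrans h2.2 h1.2⟩

lemma finite_words (A : Set M) (hA : A.Finite) (N : ℕ) :
    {l : List M | (∀ a ∈ l, a ∈ A) ∧ l.length ≤ N}.Finite := by
  haveI : Finite ↥A := hA
  have h1 : {l : List ↥A | l.length ≤ N}.Finite := List.finite_length_le _ N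
  have h2 : ((fun l : List ↥A => l.map Subtype.val) '' {l | l.length ≤ N}).Finite :=
    h1.image _
  refine h2.subset ?_
  rintro l ⟨hmem, hlen⟩
  refine ⟨l.pmap (fun a ha => (⟨a, ha⟩ : ↥A)) hmem, ?_, ?_⟩
  · simpa using hlen
  · simp [List.map_pmap]

/-- Key lemma: for any property `P` of (x, word) implying `IsFac`, in a loft premonoid
bounded lengths iff finitely many classes. -/
lemma key {r : M → M → Prop} (hrefl : Reflexive r) (htrans : Transitive r)
    (hloft : IsLoft r) (P : M → List M → Prop)
    (hPfac : ∀ {x l}, P x l → IsFac r x l) :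
    (∀ x : M, RNonUnit r x →
        {n : ℕ | ∃ l : List M, P x l ∧ l.length = n}.Finite ∧
          {n : ℕ | ∃ l : List M, P x l ∧ l.length = n}.Nonempty) ↔
      (∀ x : M, RNonUnit r x →
        (∃ l : List M, P x l) ∧
          ∃ F : Set (List M), F.Finite ∧
            ∀ l : List M, P x l → ∃ m ∈ F, P x m ∧ WordEquiv r l m) := by
  constructor
  · intro hB x hx
    obtain ⟨hfin, ⟨n0, l0, hl0, -⟩⟩ := hB x hx
    refine ⟨⟨l0, hl0⟩, ?_⟩
    obtain ⟨N, hN⟩ := hfin.bddAbove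
    obtain ⟨A, hAfin, -, hA⟩ := hloft x hx
    set W := {m : List M | (∀ a ∈ m, a ∈ A) ∧ m.length ≤ N} with hW
    have hWfin : W.Finite := finite_words A hAfin N
    classical
    set pick : List M → List M := fun w =>
      if h : ∃ l : List M, P x l ∧ WordEquiv r l w then h.choose else [] with hpick
    refine ⟨pick '' W, hWfin.image _, ?_⟩
    intro l hl
    obtain ⟨m, hmA, hlm⟩ := hA l (hPfac hl)
    have hlen : m.length ≤ N := by
      have h1 : m.length ≤ l.length := wordLe_length hlm.2
      have h2 : l.length ≤ N := hN ⟨l, hl, rfl⟩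
      omega
    have hmW : m ∈ W := ⟨hmA, hlen⟩
    have hex : ∃ l' : List M, P x l' ∧ WordEquiv r l' m := ⟨l, hl, hlm⟩
    refine ⟨pick m, ⟨m, hmW, rfl⟩, ?_, ?_⟩
    · rw [hpick]; simp only [dif_pos hex]; exact hex.choose_spec.1
    · rw [hpick]; simp only [dif_pos hex]
      exact wordEquiv_trans htrans hlm (wordEquiv_symm hex.choose_spec.2)
  · intro hF x hx
    obtain ⟨⟨l0, hl0⟩, F, hFfin, hFrep⟩ := hF x hx
    refine ⟨?_, ⟨l0.length, l0, hl0, rfl⟩⟩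
    refine ((hFfin.image List.length).subset ?_)
    rintro n ⟨l, hl, rfl⟩
    obtain ⟨m, hmF, -, hlm⟩ := hFrep l hl
    refine ⟨m, hmF, ?_⟩
    exact le_antisymm (wordLe_length hlm.2) (wordLe_length hlm.1)

end Aux

/-- Theorem 4.11(i). A loft premonoid is BF-factorable iff it is
FF-factorable, and BmF-factorable iff it is FmF-factorable. -/
theorem stmt10 {H : Type*} [Monoid H] (r : H → H → Prop)
    (hrefl : Reflexive r) (htrans : Transitive r) (hloft : IsLoft r) :
    (IsBFFactorable r ↔ IsFFFactorable r) ∧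
    (IsBmFFactorable r ↔ IsFmFFactorable r) := by
  exact ⟨key hrefl htrans hloft (fun x l => IsFac r x l) (fun h => h),
    key hrefl htrans hloft (fun x l => IsMinFac r x l) (fun h => h.1)⟩

end FactPaper
end

section
/- Let 𝓗 = (H, ≼) be a loft premonoid. Then, up to ⊑_𝓗-equivalence, every ≼-non-unit of H has only finitely many minimal ≼-factorizations; that is, for every ≼-non-unit x the quotient of Z^m_𝓗(x) by ⊑_𝓗-equivalence is finite. -/
open Pointwise

/-!
Identify `r`-equivalent letters, so that a word is recorded by how many of its letters fall
into each `r`-equivalence class. Then `⊑` becomes the pointwise order on these count vectors,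
so the count vectors of the minimal factorizations of `x` form an antichain. The loft
hypothesis makes all of them supported on the finitely many classes of a finite set `A`,
and by Dickson's lemma such an antichain is finite; one minimal factorization per vector
gives the required finite set.
-/

theorem Function.exists_embedding_comp_eq_iff_card_fiber_le {α β γ : Type*} [Finite α]
    [Finite β] {f : α → γ} {g : β → γ} :
    (∃ e : α ↪ β, ∀ a, g (e a) = f a) ↔
      ∀ c, Nat.card {a // f a = c} ≤ Nat.card {b // g b = c} := by
  constructor
  · rintro ⟨e, he⟩ c
    exact Nat.card_le_card_of_injective (fun a => ⟨e a, (he a).trans a.2⟩)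
      fun a b hab => Subtype.ext (e.injective (congrArg Subtype.val hab))
  · intro h
    have fiberEmbedding : ∀ c, Nonempty ({a // f a = c} ↪ {b // g b = c}) := fun c => by
      have := Fintype.ofFinite {a // f a = c}
      have := Fintype.ofFinite {b // g b = c}
      refine Function.Embedding.nonempty_of_card_le ?_
      simpa only [Nat.card_eq_fintype_card] using h c
    let e := fun c => (fiberEmbedding c).some
    refine ⟨(Equiv.sigmaFiberEquiv f).symm.toEmbedding.trans
      (((Function.Embedding.refl γ).sigmaMap e).trans (Equiv.sigmaFiberEquiv g).toEmbedding),
      fun a => (e (f a) ⟨a, rfl⟩).2⟩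

theorem IsAntichain.finite_of_support_subset {γ : Type*} {C : Set γ} {S : Set (γ → ℕ)}
    (hS : IsAntichain (· ≤ ·) S) (hC : C.Finite) (hsupp : ∀ f ∈ S, Function.support f ⊆ C) :
    S.Finite := by
  have : Finite C := hC
  let restrict : (γ → ℕ) → (C → ℕ) := fun f c => f c
  have le_of_restrict_le : ∀ f ∈ S, ∀ g ∈ S, restrict f ≤ restrict g → f ≤ g := by
    intro f hf g hg hfg c
    by_cases hc : c ∈ C
    · exact hfg ⟨c, hc⟩
    · simp [Function.notMem_support.1 fun h => hc (hsupp f hf h)]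
  have hinj : Set.InjOn restrict S := fun f hf g hg hfg =>
    le_antisymm (le_of_restrict_le f hf g hg hfg.le) (le_of_restrict_le g hg f hf hfg.ge)
  refine Set.Finite.of_finite_image (WellQuasiOrderedLE.finite_of_isAntichain ?_) hinj
  rintro _ ⟨f, hf, rfl⟩ _ ⟨g, hg, rfl⟩ hne hle
  exact hS hf hg (fun h => hne (h ▸ rfl)) (le_of_restrict_le f hf g hg hle)

theorem toAntisymmetrization_eq_iff {α : Type*} {r : α → α → Prop} [IsPreorder α r] {a b : α} :
    toAntisymmetrization r a = toAntisymmetrization r b ↔ AntisymmRel r a b :=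
  Quotient.eq

namespace FactPaper

section ClassCount

variable {H : Type*} (r : H → H → Prop) [IsPreorder H r]

noncomputable def classCount (l : List H) (q : Antisymmetrization H r) : ℕ :=
  Nat.card {i : Fin l.length // toAntisymmetrization r (l.get i) = q}

variable {r}

theorem wordLe_iff_classCount_le {l m : List H} :
    WordLe r l m ↔ classCount r l ≤ classCount r m := by
  simp only [Pi.le_def, classCount, ← Function.exists_embedding_comp_eq_iff_card_fiber_le,
    WordLe, toAntisymmetrization_eq_iff, AntisymmRel, and_comm]

theorem classCount_ne_zero_iff {l : List H} {q : Antisymmetrization H r} :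
    classCount r l q ≠ 0 ↔ ∃ a ∈ l, toAntisymmetrization r a = q := by
  rw [← Nat.pos_iff_ne_zero, classCount, Finite.card_pos_iff]
  simp [List.mem_iff_get]

theorem isAntichain_classCount_image_isMinFac [Monoid H] (x : H) :
    IsAntichain (· ≤ ·) (classCount r '' {l | IsMinFac r x l}) := by
  rintro _ ⟨l, hl, rfl⟩ _ ⟨m, hm, rfl⟩ hne hle
  have hlm : WordLe r l m := wordLe_iff_classCount_le.2 hle
  exact hne (le_antisymm hle (wordLe_iff_classCount_le.1 (hm.2 l hl.1 hlm)))

end ClassCount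

/-- Theorem 4.11(ii). In a loft premonoid, every `≼`-non-unit has,
up to `⊑`-equivalence, only finitely many minimal `≼`-factorizations. -/
theorem stmt11 {H : Type*} [Monoid H] (r : H → H → Prop)
    (hrefl : Reflexive r) (htrans : Transitive r) (hloft : IsLoft r) :
    ∀ x : H, RNonUnit r x →
      ∃ F : Set (List H), F.Finite ∧
        ∀ l : List H, IsMinFac r x l → ∃ m ∈ F, IsMinFac r x m ∧ WordEquiv r l m := by
  have : IsPreorder H r := { refl := hrefl, trans := htrans }
  intro x hx
  obtain ⟨A, hAfin, -, hAcover⟩ := hloft x hx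
  have hsupp : ∀ l, IsFac r x l →
      Function.support (classCount r l) ⊆ toAntisymmetrization r '' A := by
    intro l hl q hq
    obtain ⟨m, hmA, hlm, -⟩ := hAcover l hl
    have hmq : classCount r m q ≠ 0 :=
      fun h => hq (Nat.eq_zero_of_le_zero (h ▸ wordLe_iff_classCount_le.1 hlm q))
    obtain ⟨a, ha, rfl⟩ := classCount_ne_zero_iff.1 hmq
    exact ⟨a, hmA a ha, rfl⟩
  have hfin : (classCount r '' {l | IsMinFac r x l}).Finite :=
    (isAntichain_classCount_image_isMinFac x).finite_of_support_subset (hAfin.image _)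
      (by rintro _ ⟨l, hl, rfl⟩; exact hsupp l hl.1)
  obtain ⟨F, hFmin, hFfin, hFimage⟩ :=
    Set.exists_subset_image_finite_and.1 ⟨_, subset_rfl, hfin, rfl⟩
  refine ⟨F, hFfin, fun l hl => ?_⟩
  obtain ⟨m, hmF, hml⟩ : classCount r l ∈ classCount r '' F := hFimage ▸ ⟨l, hl, rfl⟩
  exact ⟨m, hmF, hFmin hmF,
    wordLe_iff_classCount_le.2 hml.ge, wordLe_iff_classCount_le.2 hml.le⟩

end FactPaper
end
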